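/- arXiv:2410.21331 — 3 statements merged into one kernel-verified Lean document; each statement's English description precedes it below -/
import Mathlib

section
/- Let $x_1, x_2$ be i.i.d. with law $S\,\delta_0 + (1-S)\,\mathrm{Unif}(0,1]$ for $S \in [0,1)$. Then the conditional expectations satisfy $\mathbb{E}[x_1 \mid x_1 \le x_2] = \frac{1}{3}\frac{(1-S)^2}{1+S^2}$ and $\mathbb{E}[x_1 \mid x_1 > x_2] = \frac{1}{3}\frac{2+S}{1+S}$. -/
/-!
By independence, `(X1, X2)` has law `ν = μ ⊗ μ` with `μ = mixLaw S`, so conditioning on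
`{(X1, X2) ∈ s}` gives `E[X1 | ·] = (∫_s p₁ dν) / ν s`. By Tonelli both numerator and
denominator are `μ`-integrals of `x ↦ f x · μ(section at x)`; the sections are `[x, ∞)` and
`(-∞, x)`, whose `μ`-masses are affine in `x` on `(0, 1]`. Integrating against `μ` is
`S · (value at 0) + (1 - S) · ∫₀¹`, which yields the probabilities `(1 ± S²)/2` and the partial
moments `(1 - S)²/6` and `(1 - S)(2 + S)/6`.
-/

open MeasureTheory ProbabilityTheory

/-- The sparse-uniform mixture law `S·δ₀ + (1-S)·Unif(0,1]`. -/
noncomputable def mixLaw (S : ℝ) : Measure ℝ :=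
  (ENNReal.ofReal S) • Measure.dirac 0 +
    (ENNReal.ofReal (1 - S)) • (volume.restrict (Set.Ioc (0:ℝ) 1))

open Set ENNReal

lemma map_cond_preimage {Ω α : Type*} [MeasurableSpace Ω] [MeasurableSpace α] {μ : Measure Ω}
    {X : Ω → α} (hX : Measurable X) {s : Set α} (hs : MeasurableSet s) :
    (μ[|X ⁻¹' s]).map X = (μ.map X)[|s] := by
  simp only [ProbabilityTheory.cond, Measure.map_smul, Measure.restrict_map hX hs,
    Measure.map_apply hX hs]

lemma integral_cond_eq_toReal_lintegral {α : Type*} [MeasurableSpace α] {μ : Measure α}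
    {s : Set α} {g : α → ℝ} (hg : AEStronglyMeasurable g (μ.restrict s))
    (hg_nonneg : 0 ≤ᵐ[μ.restrict s] g) :
    ∫ x, g x ∂μ[|s] = (μ s).toReal⁻¹ * (∫⁻ x in s, ENNReal.ofReal (g x) ∂μ).toReal := by
  rw [ProbabilityTheory.cond, integral_smul_measure, toReal_inv, smul_eq_mul,
    integral_eq_lintegral_of_nonneg_ae hg_nonneg hg]

lemma setLIntegral_prod_comp_fst {α β : Type*} [MeasurableSpace α] [MeasurableSpace β]
    (μ : Measure α) (ν : Measure β) [SFinite ν] {s : Set (α × β)} (hs : MeasurableSet s)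
    {f : α → ℝ≥0∞} (hf : Measurable f) :
    ∫⁻ p in s, f p.1 ∂μ.prod ν = ∫⁻ x, f x * ν (Prod.mk x ⁻¹' s) ∂μ := by
  rw [← lintegral_indicator hs, lintegral_prod (s.indicator fun p => f p.1)
    ((hf.comp measurable_fst).indicator hs).aemeasurable]
  congr 1 with x
  rw [← setLIntegral_const, ← lintegral_indicator (measurable_prodMk_left hs)]
  rfl

lemma integral_quadratic_zero_one (a b c : ℝ) :
    ∫ x in (0:ℝ)..1, a + b * x + c * x ^ 2 = a + b / 2 + c / 3 := by
  have hint {g : ℝ → ℝ} (hg : Continuous g) : IntervalIntegrable g volume 0 1 :=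
    hg.intervalIntegrable 0 1
  rw [intervalIntegral.integral_add (hint (by fun_prop)) (hint (by fun_prop)),
    intervalIntegral.integral_add (hint (by fun_prop)) (hint (by fun_prop)),
    intervalIntegral.integral_const_mul, intervalIntegral.integral_const_mul,
    intervalIntegral.integral_const, integral_id, integral_pow]
  norm_num
  ring

instance (S : ℝ) : SFinite (mixLaw S) := by unfold mixLaw; infer_instance

lemma lintegral_mixLaw (S : ℝ) (f : ℝ → ℝ≥0∞) :
    ∫⁻ x, f x ∂mixLaw S
      = ENNReal.ofReal S * f 0 + ENNReal.ofReal (1 - S) * ∫⁻ x in Ioc 0 1, f x := by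
  simp [mixLaw, lintegral_add_measure, lintegral_smul_measure]

lemma mixLaw_apply (S : ℝ) {t : Set ℝ} (ht : MeasurableSet t) :
    mixLaw S t
      = ENNReal.ofReal S * t.indicator 1 0 + ENNReal.ofReal (1 - S) * volume (t ∩ Ioc 0 1) := by
  simp [mixLaw, Measure.dirac_apply' _ ht, Measure.restrict_apply ht]

lemma mixLaw_Ici_zero {S : ℝ} (hS : S ∈ Icc 0 1) : mixLaw S (Ici 0) = 1 := by
  rw [mixLaw_apply S measurableSet_Ici, inter_eq_right.2 fun x hx => mem_Ici.2 hx.1.le]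
  simp [← ENNReal.ofReal_add hS.1 (sub_nonneg.2 hS.2)]

lemma mixLaw_Iio_zero (S : ℝ) : mixLaw S (Iio 0) = 0 := by
  rw [mixLaw_apply S measurableSet_Iio,
    ((Iic_disjoint_Ioc le_rfl).mono_left Iio_subset_Iic_self).inter_eq]
  simp

lemma ae_nonneg_mixLaw (S : ℝ) : ∀ᵐ x ∂mixLaw S, 0 ≤ x :=
  measure_mono_null (fun _ (hx : ¬0 ≤ _) => mem_Iio.2 (not_le.1 hx)) (mixLaw_Iio_zero S)

lemma mixLaw_Ici {S x : ℝ} (hx : x ∈ Ioc 0 1) :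
    mixLaw S (Ici x) = ENNReal.ofReal ((1 - S) * (1 - x)) := by
  have : Ici x ∩ Ioc 0 1 = Icc x 1 := by
    ext y; simp only [mem_inter_iff, mem_Ici, mem_Ioc, mem_Icc]; grind
  rw [mixLaw_apply S measurableSet_Ici, this]
  simp [not_le.2 hx.1, ENNReal.ofReal_mul' (sub_nonneg.2 hx.2)]

lemma mixLaw_Iio {S x : ℝ} (hS : S ∈ Icc 0 1) (hx : x ∈ Ioc 0 1) :
    mixLaw S (Iio x) = ENNReal.ofReal (S + (1 - S) * x) := by
  have : Iio x ∩ Ioc 0 1 = Ioo 0 x := by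
    ext y; simp only [mem_inter_iff, mem_Iio, mem_Ioc, mem_Ioo]; grind
  rw [mixLaw_apply S measurableSet_Iio, this]
  simp [hx.1, ENNReal.ofReal_mul' hx.1.le,
    ENNReal.ofReal_add hS.1 (mul_nonneg (sub_nonneg.2 hS.2) hx.1.le)]

lemma toReal_lintegral_mixLaw {S : ℝ} (hS : S ∈ Icc 0 1) {F : ℝ → ℝ≥0∞} {F₀ a b c : ℝ}
    (hF₀ : F 0 = ENNReal.ofReal F₀) (hF₀_nonneg : 0 ≤ F₀)
    (hF : ∀ x ∈ Ioc (0:ℝ) 1, F x = ENNReal.ofReal (a + b * x + c * x ^ 2))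
    (hq : ∀ x ∈ Ioc (0:ℝ) 1, 0 ≤ a + b * x + c * x ^ 2) :
    (∫⁻ x, F x ∂mixLaw S).toReal = S * F₀ + (1 - S) * (a + b / 2 + c / 3) := by
  have hIoc :
      ∫⁻ x in Ioc 0 1, F x = ENNReal.ofReal (∫ x in Ioc 0 1, a + b * x + c * x ^ 2) := by
    rw [setLIntegral_congr_fun measurableSet_Ioc hF, ofReal_integral_eq_lintegral_ofReal
      (Continuous.integrableOn_Ioc (by fun_prop))
      ((ae_restrict_iff' measurableSet_Ioc).2 (ae_of_all _ hq))]
  have hI_nonneg : 0 ≤ ∫ x in Ioc 0 1, a + b * x + c * x ^ 2 :=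
    setIntegral_nonneg measurableSet_Ioc hq
  rw [lintegral_mixLaw, hF₀, hIoc, toReal_add (by finiteness) (by finiteness), toReal_mul,
    toReal_mul, toReal_ofReal hS.1, toReal_ofReal hF₀_nonneg, toReal_ofReal (sub_nonneg.2 hS.2),
    toReal_ofReal hI_nonneg, ← intervalIntegral.integral_of_le zero_le_one,
    integral_quadratic_zero_one]

section
variable {S : ℝ} (hS : S ∈ Icc 0 1)
include hS

lemma toReal_mixLaw_prod_fst_le_snd :
    ((mixLaw S).prod (mixLaw S) {p | p.1 ≤ p.2}).toReal = (1 + S ^ 2) / 2 := by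
  rw [Measure.prod_apply (measurableSet_le measurable_fst measurable_snd)]
  change (∫⁻ x, mixLaw S (Ici x) ∂mixLaw S).toReal = _
  rw [toReal_lintegral_mixLaw hS (a := 1 - S) (b := S - 1) (c := 0)
    ((mixLaw_Ici_zero hS).trans ofReal_one.symm) zero_le_one
    (fun x hx => by rw [mixLaw_Ici hx]; congr 1; ring)
    (fun x hx => by nlinarith [hx.2, hS.2])]
  ring

lemma toReal_mixLaw_prod_snd_lt_fst :
    ((mixLaw S).prod (mixLaw S) {p | p.2 < p.1}).toReal = (1 - S ^ 2) / 2 := by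
  rw [Measure.prod_apply (measurableSet_lt measurable_snd measurable_fst)]
  change (∫⁻ x, mixLaw S (Iio x) ∂mixLaw S).toReal = _
  rw [toReal_lintegral_mixLaw hS (a := S) (b := 1 - S) (c := 0)
    ((mixLaw_Iio_zero S).trans ofReal_zero.symm) le_rfl
    (fun x hx => by rw [mixLaw_Iio hS hx]; congr 1; ring)
    (fun x hx => by nlinarith [hx.1, hS.1, hS.2])]
  ring

lemma toReal_setLIntegral_mixLaw_prod_fst_le_snd :
    (∫⁻ p in {p : ℝ × ℝ | p.1 ≤ p.2}, ENNReal.ofReal p.1 ∂(mixLaw S).prod (mixLaw S)).toReal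
      = (1 - S) ^ 2 / 6 := by
  rw [setLIntegral_prod_comp_fst _ _ (measurableSet_le measurable_fst measurable_snd)
    ENNReal.measurable_ofReal]
  change (∫⁻ x, ENNReal.ofReal x * mixLaw S (Ici x) ∂mixLaw S).toReal = _
  rw [toReal_lintegral_mixLaw hS (a := 0) (b := 1 - S) (c := S - 1) (by simp) le_rfl
    (fun x hx => by rw [mixLaw_Ici hx, ← ofReal_mul hx.1.le]; congr 1; ring)
    (fun x hx => by nlinarith [hx.1, hx.2, hS.2, mul_nonneg hx.1.le (sub_nonneg.2 hx.2)])]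
  ring

lemma toReal_setLIntegral_mixLaw_prod_snd_lt_fst :
    (∫⁻ p in {p : ℝ × ℝ | p.2 < p.1}, ENNReal.ofReal p.1 ∂(mixLaw S).prod (mixLaw S)).toReal
      = (1 - S) * (2 + S) / 6 := by
  rw [setLIntegral_prod_comp_fst _ _ (measurableSet_lt measurable_snd measurable_fst)
    ENNReal.measurable_ofReal]
  change (∫⁻ x, ENNReal.ofReal x * mixLaw S (Iio x) ∂mixLaw S).toReal = _
  rw [toReal_lintegral_mixLaw hS (a := 0) (b := S) (c := 1 - S) (by simp) le_rfl
    (fun x hx => by rw [mixLaw_Iio hS hx, ← ofReal_mul hx.1.le]; congr 1; ring)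
    (fun x hx => by nlinarith [hx.1, hS.1, hS.2, mul_nonneg hx.1.le hx.1.le])]
  ring

end

theorem stmt3 {Ω : Type*} [MeasureSpace Ω] [IsProbabilityMeasure (ℙ : Measure Ω)]
    (S : ℝ) (hS : S ∈ Set.Ico (0:ℝ) 1)
    (X1 X2 : Ω → ℝ) (hX1 : Measurable X1) (hX2 : Measurable X2)
    (hindep : IndepFun X1 X2)
    (hL1 : Measure.map X1 ℙ = mixLaw S) (hL2 : Measure.map X2 ℙ = mixLaw S) :
    (∫ ω, X1 ω ∂(ℙ[|{ω | X1 ω ≤ X2 ω}])) = (1/3) * ((1 - S)^2 / (1 + S^2)) ∧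
    (∫ ω, X1 ω ∂(ℙ[|{ω | X2 ω < X1 ω}])) = (1/3) * ((2 + S) / (1 + S)) := by
  have hS' : S ∈ Icc 0 1 := Ico_subset_Icc_self hS
  set ν := (mixLaw S).prod (mixLaw S)
  have hpair : Measurable fun ω => (X1 ω, X2 ω) := hX1.prodMk hX2
  have hlaw : (ℙ : Measure Ω).map (fun ω => (X1 ω, X2 ω)) = ν := by
    rw [(indepFun_iff_map_prod_eq_prod_map_map hX1.aemeasurable hX2.aemeasurable).1 hindep,
      hL1, hL2]
  have hcond {s : Set (ℝ × ℝ)} (hs : MeasurableSet s) :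
      ∫ ω, X1 ω ∂ℙ[|(fun ω => (X1 ω, X2 ω)) ⁻¹' s]
        = (ν s).toReal⁻¹ * (∫⁻ p in s, ENNReal.ofReal p.1 ∂ν).toReal := by
    rw [← integral_map hpair.aemeasurable measurable_fst.aestronglyMeasurable,
      map_cond_preimage hpair hs, hlaw, integral_cond_eq_toReal_lintegral
        measurable_fst.aestronglyMeasurable
        (ae_restrict_of_ae (Measure.quasiMeasurePreserving_fst.ae (ae_nonneg_mixLaw S)))]
  constructor
  · refine (hcond (measurableSet_le measurable_fst measurable_snd)).trans ?_
    rw [toReal_mixLaw_prod_fst_le_snd hS', toReal_setLIntegral_mixLaw_prod_fst_le_snd hS']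
    field_simp
    ring
  · have h1S : 1 - S ≠ 0 := sub_ne_zero.2 hS.2.ne'
    refine (hcond (measurableSet_lt measurable_snd measurable_fst)).trans ?_
    rw [toReal_mixLaw_prod_snd_lt_fst hS', toReal_setLIntegral_mixLaw_prod_snd_lt_fst hS',
      show 1 - S ^ 2 = (1 - S) * (1 + S) by ring]
    field_simp
    ring
end

section
/- Let $x_1, x_2$ be i.i.d. with law $S\,\delta_0 + (1-S)\,\mathrm{Unif}(0,1]$ for $S \in [0,1)$. Then $\mathbb{E}[x_1 - x_2 \mid x_1 > x_2] - \mathbb{E}[x_1 - x_2 \mid x_1 \le x_2] = \frac{2}{3}\frac{1+2S}{(1+S)(1+S^2)}$. -/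
/-!
Since `X1` and `X2` are identically distributed, `X1 - X2` has mean zero, so for
`A = {X2 < X1}` the two conditional means are `I / P(A)` and `-I / (1 - P(A))` with
`I = ∫_A (X1 - X2)`. By independence, `P(A) = (1 - S²)/2` and `I = (1 - S)(1 + 2S)/6` are
integrals of `g (x - y)` over `{y < x}` against the product of two mixture laws; Fubini reduces
them to one-dimensional integrals, in which the atom at `0` only contributes through `y = 0 < x`.
-/

open MeasureTheory ProbabilityTheory

open Set

section ConditionalMeanGap

variable {Ω : Type*} [MeasurableSpace Ω]

lemma integral_cond_eq_inv_mul_setIntegral (P : Measure Ω) (s : Set Ω) (Z : Ω → ℝ) :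
    ∫ ω, Z ω ∂P[|s] = (P.real s)⁻¹ * ∫ ω in s, Z ω ∂P := by
  rw [ProbabilityTheory.cond, integral_smul_measure, ENNReal.toReal_inv, smul_eq_mul,
    measureReal_def]

lemma integral_cond_sub_integral_cond_compl {P : Measure Ω} [IsProbabilityMeasure P]
    {Z : Ω → ℝ} (hZ : Integrable Z P) (hZ0 : ∫ ω, Z ω ∂P = 0) {s : Set Ω}
    (hs : MeasurableSet s) :
    ∫ ω, Z ω ∂P[|s] - ∫ ω, Z ω ∂P[|sᶜ]
      = (∫ ω in s, Z ω ∂P) * ((P.real s)⁻¹ + (1 - P.real s)⁻¹) := by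
  have hcompl : ∫ ω in sᶜ, Z ω ∂P = -∫ ω in s, Z ω ∂P := by
    linarith [integral_add_compl hs hZ]
  rw [integral_cond_eq_inv_mul_setIntegral, integral_cond_eq_inv_mul_setIntegral, hcompl,
    probReal_compl_eq_one_sub hs]
  ring

end ConditionalMeanGap

section MixLaw

variable {S : ℝ}

lemma isProbabilityMeasure_mixLaw (h0 : 0 ≤ S) (h1 : S ≤ 1) :
    IsProbabilityMeasure (mixLaw S) := by
  constructor
  simp [mixLaw, ← ENNReal.ofReal_add h0 (sub_nonneg.2 h1)]

lemma ae_mem_Icc_mixLaw (S : ℝ) : ∀ᵐ x ∂mixLaw S, x ∈ Icc (0:ℝ) 1 := by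
  simp only [mixLaw, ae_add_measure_iff]
  refine ⟨Measure.ae_smul_measure ?_ _, Measure.ae_smul_measure ?_ _⟩
  · simp
  · exact (ae_restrict_mem measurableSet_Ioc).mono fun x hx => Ioc_subset_Icc_self hx

lemma integrable_mixLaw_of_bound (h0 : 0 ≤ S) (h1 : S ≤ 1) {f : ℝ → ℝ} (hf : Measurable f)
    {C : ℝ} (hC : ∀ x ∈ Icc (0:ℝ) 1, |f x| ≤ C) : Integrable f (mixLaw S) :=
  have := isProbabilityMeasure_mixLaw h0 h1
  .of_bound hf.aestronglyMeasurable C ((ae_mem_Icc_mixLaw S).mono hC)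

lemma integral_mixLaw (h0 : 0 ≤ S) (h1 : S ≤ 1) {f : ℝ → ℝ}
    (hf : Integrable f (mixLaw S)) :
    ∫ x, f x ∂mixLaw S = S * f 0 + (1 - S) * ∫ x in Ioc (0:ℝ) 1, f x := by
  obtain ⟨hdirac, hunif⟩ := integrable_add_measure.1 hf
  rw [mixLaw, integral_add_measure hdirac hunif, integral_smul_measure, integral_smul_measure,
    integral_dirac, ENNReal.toReal_ofReal h0, ENNReal.toReal_ofReal (sub_nonneg.2 h1),
    smul_eq_mul, smul_eq_mul]

lemma integrable_of_map_eq_mixLaw {Ω : Type*} [MeasurableSpace Ω] {P : Measure Ω}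
    (h0 : 0 ≤ S) (h1 : S ≤ 1) {X : Ω → ℝ} (hX : Measurable X) (hL : P.map X = mixLaw S) :
    Integrable X P := by
  refine (integrable_map_measure aestronglyMeasurable_id hX.aemeasurable).1 ?_
  rw [hL]
  exact integrable_mixLaw_of_bound h0 h1 measurable_id fun x hx =>
    (abs_of_nonneg hx.1).trans_le hx.2

end MixLaw

lemma integral_Ioc_indicator_comp_sub {g : ℝ → ℝ} (hg : Continuous g) {x : ℝ}
    (hx : x ∈ Icc (0:ℝ) 1) :
    ∫ y in Ioc (0:ℝ) 1, (Ioi 0).indicator g (x - y) = ∫ t in 0..x, g t := by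
  have hφ : ∀ a b : ℝ, IntervalIntegrable ((Ioi 0).indicator g) volume a b := fun a b =>
    ⟨(hg.intervalIntegrable a b).1.indicator measurableSet_Ioi,
      (hg.intervalIntegrable a b).2.indicator measurableSet_Ioi⟩
  rw [← intervalIntegral.integral_of_le zero_le_one, intervalIntegral.integral_comp_sub_left,
    sub_zero, ← intervalIntegral.integral_add_adjacent_intervals (b := 0) (hφ _ _) (hφ _ _)]
  have hneg : ∫ t in x - 1..0, (Ioi 0).indicator g t = 0 := by
    refine (intervalIntegral.integral_congr fun t ht => ?_).trans intervalIntegral.integral_zero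
    rw [uIcc_of_le (by linarith [hx.2])] at ht
    exact indicator_of_notMem (not_lt.2 ht.2) g
  have hpos : ∫ t in 0..x, (Ioi 0).indicator g t = ∫ t in 0..x, g t := by
    refine intervalIntegral.integral_congr_ae (ae_of_all _ fun t ht => ?_)
    rw [uIoc_of_le hx.1] at ht
    exact indicator_of_mem ht.1 g
  rw [hneg, hpos, zero_add]

lemma setIntegral_mixLaw_prod_lt {S : ℝ} (h0 : 0 ≤ S) (h1 : S ≤ 1) {g : ℝ → ℝ}
    (hg : Continuous g) :
    ∫ p in {p : ℝ × ℝ | p.2 < p.1}, g (p.1 - p.2) ∂(mixLaw S).prod (mixLaw S)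
      = (1 - S) * ∫ x in Ioc (0:ℝ) 1, (S * g x + (1 - S) * ∫ t in 0..x, g t) := by
  have := isProbabilityMeasure_mixLaw h0 h1
  set φ : ℝ → ℝ := (Ioi 0).indicator g
  have hφ : Measurable φ := hg.measurable.indicator measurableSet_Ioi
  obtain ⟨C, hC⟩ := isCompact_Icc.exists_bound_of_continuousOn (hg.continuousOn (s := Icc 0 1))
  have hφC : ∀ t ≤ 1, |φ t| ≤ C := fun t ht => by
    by_cases h : 0 < t
    · simpa [φ, indicator_of_mem (mem_Ioi.2 h)] using hC t ⟨h.le, ht⟩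
    · rw [show φ t = 0 from indicator_of_notMem h g, abs_zero]
      exact (abs_nonneg _).trans (hC 0 ⟨le_rfl, zero_le_one⟩)
  have hsection : ∀ x ∈ Icc (0:ℝ) 1,
      ∫ y, φ (x - y) ∂mixLaw S = S * φ x + (1 - S) * ∫ t in 0..x, g t := fun x hx => by
    rw [integral_mixLaw h0 h1 (integrable_mixLaw_of_bound h0 h1 (by fun_prop)
      fun y hy => hφC _ (by linarith [hx.2, hy.1])), sub_zero,
      integral_Ioc_indicator_comp_sub hg hx]
  have hF : Integrable (fun p : ℝ × ℝ => φ (p.1 - p.2)) ((mixLaw S).prod (mixLaw S)) := by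
    refine .of_bound (hφ.comp (by fun_prop)).aestronglyMeasurable C ?_
    filter_upwards [Measure.quasiMeasurePreserving_fst.ae (ae_mem_Icc_mixLaw S),
      Measure.quasiMeasurePreserving_snd.ae (ae_mem_Icc_mixLaw S)] with p hp1 hp2
    exact hφC _ (by linarith [hp1.2, hp2.1])
  have hlt : ∀ p : ℝ × ℝ, {p : ℝ × ℝ | p.2 < p.1}.indicator (fun p => g (p.1 - p.2)) p
      = φ (p.1 - p.2) := fun p => by
    by_cases h : p.2 < p.1 <;> simp [φ, indicator, h]
  have hφ0 : φ 0 = 0 := indicator_of_notMem (lt_irrefl (0:ℝ)) g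
  rw [← integral_indicator (measurableSet_lt measurable_snd measurable_fst), funext hlt,
    integral_prod _ hF, integral_mixLaw h0 h1 hF.integral_prod_left,
    hsection 0 ⟨le_rfl, zero_le_one⟩, intervalIntegral.integral_same, hφ0]
  simp only [mul_zero, add_zero, zero_add]
  congr 1
  refine setIntegral_congr_fun measurableSet_Ioc fun x hx => ?_
  rw [hsection x (Ioc_subset_Icc_self hx), show φ x = g x from indicator_of_mem hx.1 g]

lemma measureReal_mixLaw_prod_lt {S : ℝ} (h0 : 0 ≤ S) (h1 : S ≤ 1) :
    ((mixLaw S).prod (mixLaw S)).real {p : ℝ × ℝ | p.2 < p.1} = (1 - S ^ 2) / 2 := by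
  have h := setIntegral_mixLaw_prod_lt h0 h1 (g := fun _ => 1) continuous_const
  rw [setIntegral_const, smul_eq_mul, mul_one] at h
  simp only [intervalIntegral.integral_const, smul_eq_mul, sub_zero, mul_one] at h
  rw [h, ← intervalIntegral.integral_of_le zero_le_one,
    intervalIntegral.integral_add (Continuous.intervalIntegrable (by fun_prop) _ _)
      (Continuous.intervalIntegrable (by fun_prop) _ _),
    intervalIntegral.integral_const_mul, intervalIntegral.integral_const, integral_id,
    smul_eq_mul]
  ring

lemma setIntegral_mixLaw_prod_lt_sub {S : ℝ} (h0 : 0 ≤ S) (h1 : S ≤ 1) :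
    ∫ p in {p : ℝ × ℝ | p.2 < p.1}, (p.1 - p.2) ∂(mixLaw S).prod (mixLaw S)
      = (1 - S) * (1 + 2 * S) / 6 := by
  rw [setIntegral_mixLaw_prod_lt h0 h1 (g := fun t => t) continuous_id,
    ← intervalIntegral.integral_of_le zero_le_one]
  simp only [integral_id, zero_pow two_ne_zero, sub_zero]
  rw [intervalIntegral.integral_add (Continuous.intervalIntegrable (by fun_prop) _ _)
      (Continuous.intervalIntegrable (by fun_prop) _ _),
    intervalIntegral.integral_const_mul, intervalIntegral.integral_const_mul, integral_id,
    intervalIntegral.integral_div, integral_pow]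
  ring

theorem stmt9 {Ω : Type*} [MeasureSpace Ω] [IsProbabilityMeasure (ℙ : Measure Ω)]
    (S : ℝ) (hS : S ∈ Set.Ico (0:ℝ) 1)
    (X1 X2 : Ω → ℝ) (hX1 : Measurable X1) (hX2 : Measurable X2)
    (hindep : IndepFun X1 X2)
    (hL1 : Measure.map X1 ℙ = mixLaw S) (hL2 : Measure.map X2 ℙ = mixLaw S) :
    (∫ ω, (X1 ω - X2 ω) ∂(ℙ[|{ω | X2 ω < X1 ω}]))
      - (∫ ω, (X1 ω - X2 ω) ∂(ℙ[|{ω | X1 ω ≤ X2 ω}]))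
      = (2/3) * ((1 + 2*S) / ((1 + S) * (1 + S^2))) := by
  obtain ⟨h0, h1⟩ := hS
  have hpair : Measure.map (fun ω => (X1 ω, X2 ω)) ℙ = (mixLaw S).prod (mixLaw S) := by
    rw [(indepFun_iff_map_prod_eq_prod_map_map hX1.aemeasurable hX2.aemeasurable).1 hindep,
      hL1, hL2]
  have hident : IdentDistrib X1 X2 := ⟨hX1.aemeasurable, hX2.aemeasurable, hL1.trans hL2.symm⟩
  have hint1 := integrable_of_map_eq_mixLaw h0 h1.le hX1 hL1
  have hint2 := integrable_of_map_eq_mixLaw h0 h1.le hX2 hL2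
  have hU : MeasurableSet {p : ℝ × ℝ | p.2 < p.1} :=
    measurableSet_lt measurable_snd measurable_fst
  have hPA : (ℙ : Measure Ω).real {ω | X2 ω < X1 ω} = (1 - S ^ 2) / 2 := by
    rw [← measureReal_mixLaw_prod_lt h0 h1.le, ← hpair, map_measureReal_apply (by fun_prop) hU]
    rfl
  have hIA : ∫ ω in {ω | X2 ω < X1 ω}, (X1 ω - X2 ω) = (1 - S) * (1 + 2 * S) / 6 := by
    rw [← setIntegral_mixLaw_prod_lt_sub h0 h1.le, ← hpair,
      setIntegral_map hU (by fun_prop) (by fun_prop)]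
    rfl
  have hcompl : {ω | X1 ω ≤ X2 ω} = {ω | X2 ω < X1 ω}ᶜ := by ext; simp
  have hmean : ∫ ω, (X1 ω - X2 ω) = 0 := by
    rw [integral_sub hint1 hint2, hident.integral_eq, sub_self]
  rw [hcompl, integral_cond_sub_integral_cond_compl (Z := fun ω => X1 ω - X2 ω)
    (hint1.sub hint2) hmean (measurableSet_lt hX2 hX1), hPA, hIA,
    show 1 - (1 - S ^ 2) / 2 = (1 + S ^ 2) / 2 by ring,
    show 1 - S ^ 2 = (1 - S) * (1 + S) by ring]
  have : 1 - S ≠ 0 := by linarith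
  have : 1 + S ≠ 0 := by linarith
  field_simp
  ring
end

section
/- Let $x_1, x_2$ be i.i.d. with law $S\,\delta_0 + (1-S)\,\mathrm{Unif}(0,1]$ for $S \in [0,1)$. The conditional variances of $x_1 - x_2$ satisfy $\mathrm{Var}(x_1-x_2 \mid x_1 \le x_2) = \frac{1}{6}\frac{(1-S)(1+3S)}{1+S^2} - \left(\frac{1}{3}\frac{(1-S)(1+2S)}{1+S^2}\right)^2$ and $\mathrm{Var}(x_1-x_2 \mid x_1 > x_2) = \frac{1}{6}\frac{1+3S}{1+S} - \left(\frac{1}{3}\frac{1+2S}{1+S}\right)^2$. -/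
/-!
The joint law of `(x₁, x₂)` splits into four pieces: an atom of mass `S²` at `(0, 0)`, the
uniform laws on the edges `{0} × (0, 1]` and `(0, 1] × {0}` with mass `S (1 - S)` each, and
the uniform law on the unit square with mass `(1 - S)²`. On each piece the truncated moments
`∫_{x₁ ≤ x₂} (x₁ - x₂)ᵏ` and `∫_{x₁ > x₂} (x₁ - x₂)ᵏ` are elementary integrals, and a
conditional variance is `m₂ / m₀ - (m₁ / m₀)²` in terms of these moments `mₖ`.
-/

open MeasureTheory ProbabilityTheory

open Set

section general

variable {Ω α : Type*} [MeasurableSpace Ω] [MeasurableSpace α]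

lemma cond_map (μ : Measure Ω) {T : Ω → α} (hT : Measurable T) {s : Set α}
    (hs : MeasurableSet s) : (μ.map T)[|s] = (μ[|T ⁻¹' s]).map T := by
  rw [ProbabilityTheory.cond, ProbabilityTheory.cond, Measure.map_apply hT hs,
    Measure.restrict_map hT hs, Measure.map_smul]

lemma variance_comp_cond_preimage (μ : Measure Ω) {T : Ω → α} (hT : Measurable T)
    {f : α → ℝ} (hf : Measurable f) {s : Set α} (hs : MeasurableSet s) :
    variance (f ∘ T) (μ[|T ⁻¹' s]) = variance f ((μ.map T)[|s]) := by
  rw [cond_map μ hT hs, variance_map hf.aemeasurable hT.aemeasurable]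

lemma memLp_of_continuous_of_measure_compl_null [TopologicalSpace α] [OpensMeasurableSpace α]
    {ν : Measure α} [IsFiniteMeasure ν] {f : α → ℝ} (hf : Continuous f) {K : Set α}
    (hK : IsCompact K) (hν : ν Kᶜ = 0) (p : ENNReal) : MemLp f p ν := by
  obtain ⟨C, hC⟩ := hK.exists_bound_of_continuousOn hf.continuousOn
  exact MemLp.of_bound hf.aestronglyMeasurable C
    (measure_mono_null (fun x hx hxK => hx (hC x hxK)) hν)

lemma variance_cond_eq {ν : Measure α} [IsFiniteMeasure ν] {s : Set α}
    {f : α → ℝ} (hf : MemLp f 2 (ν.restrict s)) :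
    variance f (ν[|s]) = (∫ x in s, f x ^ 2 ∂ν) / ν.real s
      - ((∫ x in s, f x ∂ν) / ν.real s) ^ 2 := by
  rcases eq_or_ne (ν s) 0 with h0 | h0
  · simp [cond_eq_zero_of_meas_eq_zero h0, measureReal_def, h0]
  have := cond_isProbabilityMeasure (s := s) h0
  have hf' : MemLp f 2 (ν[|s]) := hf.smul_measure (ENNReal.inv_ne_top.2 h0)
  rw [variance_eq_sub hf', ProbabilityTheory.cond, integral_smul_measure, integral_smul_measure]
  simp only [Pi.pow_apply, ENNReal.toReal_inv, smul_eq_mul, measureReal_def]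
  ring

end general

local notation "U" => volume.restrict (Ioc (0:ℝ) 1)

lemma mixLaw_prod_mixLaw (S : ℝ) :
    (mixLaw S).prod (mixLaw S) =
      (ENNReal.ofReal S * ENNReal.ofReal S) • Measure.dirac ((0:ℝ), (0:ℝ)) +
      (ENNReal.ofReal (1 - S) * ENNReal.ofReal S) • Measure.map (Prod.mk 0) U +
      (ENNReal.ofReal S * ENNReal.ofReal (1 - S)) • Measure.map (fun x => (x, 0)) U +
      (ENNReal.ofReal (1 - S) * ENNReal.ofReal (1 - S)) • Measure.prod U U := by
  simp only [mixLaw, Measure.prod_add, Measure.add_prod, Measure.prod_smul_left,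
    Measure.prod_smul_right, Measure.dirac_prod_dirac]
  simp only [Measure.dirac_prod, Measure.prod_dirac, smul_add, smul_smul, add_assoc]
  abel

instance (S : ℝ) : IsFiniteMeasure (mixLaw S) :=
  ⟨by simp [mixLaw, Real.volume_Ioc, ENNReal.add_lt_top]⟩

lemma mixLaw_Icc_compl (S : ℝ) : mixLaw S (Icc 0 1)ᶜ = 0 := by
  have hm : MeasurableSet (Icc (0:ℝ) 1)ᶜ := measurableSet_Icc.compl
  have h : (Icc (0:ℝ) 1)ᶜ ∩ Ioc 0 1 = ∅ :=
    eq_empty_of_forall_notMem fun x ⟨hc, hx⟩ => hc (Ioc_subset_Icc_self hx)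
  simp [mixLaw, Measure.dirac_apply' _ hm, Measure.restrict_apply hm, h]

lemma mixLaw_prod_mixLaw_unitSquare_compl (S : ℝ) :
    (mixLaw S).prod (mixLaw S) (Icc 0 1 ×ˢ Icc 0 1)ᶜ = 0 := by
  rw [compl_prod_eq_union]
  exact measure_union_null (by rw [Measure.prod_prod, mixLaw_Icc_compl]; simp)
    (by rw [Measure.prod_prod, mixLaw_Icc_compl]; simp)

lemma integrable_unitSquare {g : ℝ × ℝ → ℝ} (hg : Continuous g) :
    Integrable g (Measure.prod U U) := by
  rw [Measure.prod_restrict, ← Measure.volume_eq_prod]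
  exact (hg.continuousOn.integrableOn_compact (isCompact_Icc.prod isCompact_Icc)).mono_set
    (prod_mono Ioc_subset_Icc_self Ioc_subset_Icc_self)

lemma setIntegral_mixLaw_prod_mixLaw {S : ℝ} (hS : S ∈ Icc (0:ℝ) 1) {g : ℝ × ℝ → ℝ}
    (hg : Continuous g) {s : Set (ℝ × ℝ)} (hs : MeasurableSet s) :
    ∫ p in s, g p ∂(mixLaw S).prod (mixLaw S) =
      S * S * s.indicator g (0, 0)
      + (1 - S) * S * (∫ y in Ioc 0 1, s.indicator g (0, y))
      + S * (1 - S) * (∫ x in Ioc 0 1, s.indicator g (x, 0))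
      + (1 - S) * (1 - S) * ∫ x in Ioc 0 1, ∫ y in Ioc 0 1, s.indicator g (x, y) := by
  have hgs : Integrable (s.indicator g) ((mixLaw S).prod (mixLaw S)) :=
    (memLp_one_iff_integrable.1 (memLp_of_continuous_of_measure_compl_null hg
      (isCompact_Icc.prod isCompact_Icc) (mixLaw_prod_mixLaw_unitSquare_compl S) 1)).indicator hs
  have hgs_meas : Measurable (s.indicator g) := hg.measurable.indicator hs
  rw [← integral_indicator hs, mixLaw_prod_mixLaw] at *
  simp only [integrable_add_measure] at hgs
  obtain ⟨⟨⟨h00, h0U⟩, hU0⟩, hUU⟩ := hgs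
  rw [integral_add_measure ((h00.add_measure h0U).add_measure hU0) hUU,
    integral_add_measure (h00.add_measure h0U) hU0, integral_add_measure h00 h0U]
  simp only [integral_smul_measure, integral_dirac,
    integral_map measurable_prodMk_left.aemeasurable hgs_meas.aestronglyMeasurable,
    integral_map measurable_prodMk_right.aemeasurable hgs_meas.aestronglyMeasurable,
    integral_prod _ ((integrable_unitSquare hg).indicator hs), ENNReal.toReal_mul,
    ENNReal.toReal_ofReal hS.1, ENNReal.toReal_ofReal (sub_nonneg.2 hS.2), smul_eq_mul]

lemma integral_Ioc_zero_one_pow (k : ℕ) : ∫ x in Ioc (0:ℝ) 1, x ^ k = 1 / (k + 1) := by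
  rw [← intervalIntegral.integral_of_le zero_le_one, integral_pow]
  simp

lemma integral_unitSquare_indicator_le_sub_pow (k : ℕ) :
    ∫ x in Ioc (0:ℝ) 1, ∫ y in Ioc (0:ℝ) 1,
      {p : ℝ × ℝ | p.1 ≤ p.2}.indicator (fun p => (p.1 - p.2) ^ k) (x, y)
      = (-1) ^ k / ((k + 1) * (k + 2)) := by
  have inner : ∀ x ∈ Ioc (0:ℝ) 1, ∫ y in Ioc (0:ℝ) 1,
      {p : ℝ × ℝ | p.1 ≤ p.2}.indicator (fun p => (p.1 - p.2) ^ k) (x, y)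
      = -(x - 1) ^ (k + 1) / (k + 1) := by
    intro x hx
    have hslice : Ioc 0 1 ∩ Ici x = Icc x 1 := by
      ext y; simp only [mem_inter_iff, mem_Ioc, mem_Ici, mem_Icc]
      grind
    change ∫ y in Ioc 0 1, (Ici x).indicator (fun y => (x - y) ^ k) y = _
    rw [setIntegral_indicator measurableSet_Ici, hslice, integral_Icc_eq_integral_Ioc,
      ← intervalIntegral.integral_of_le hx.2,
      intervalIntegral.integral_comp_sub_left (fun y => y ^ k), integral_pow]
    simp
  rw [setIntegral_congr_fun measurableSet_Ioc inner,
    ← intervalIntegral.integral_of_le zero_le_one, intervalIntegral.integral_div,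
    intervalIntegral.integral_neg,
    intervalIntegral.integral_comp_sub_right (fun x => x ^ (k + 1)), integral_pow]
  field_simp
  push_cast
  ring

lemma integral_unitSquare_indicator_lt_sub_pow (k : ℕ) :
    ∫ x in Ioc (0:ℝ) 1, ∫ y in Ioc (0:ℝ) 1,
      {p : ℝ × ℝ | p.2 < p.1}.indicator (fun p => (p.1 - p.2) ^ k) (x, y)
      = 1 / ((k + 1) * (k + 2)) := by
  have inner : ∀ x ∈ Ioc (0:ℝ) 1, ∫ y in Ioc (0:ℝ) 1,
      {p : ℝ × ℝ | p.2 < p.1}.indicator (fun p => (p.1 - p.2) ^ k) (x, y)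
      = x ^ (k + 1) / (k + 1) := by
    intro x hx
    have hslice : Ioc 0 1 ∩ Iio x = Ioo 0 x := by
      ext y; simp only [mem_inter_iff, mem_Ioc, mem_Iio, mem_Ioo]
      grind
    change ∫ y in Ioc 0 1, (Iio x).indicator (fun y => (x - y) ^ k) y = _
    rw [setIntegral_indicator measurableSet_Iio, hslice, ← integral_Ioc_eq_integral_Ioo,
      ← intervalIntegral.integral_of_le hx.1.le,
      intervalIntegral.integral_comp_sub_left (fun y => y ^ k), integral_pow]
    simp
  rw [setIntegral_congr_fun measurableSet_Ioc inner, integral_div, integral_Ioc_zero_one_pow]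
  field_simp
  push_cast
  ring

noncomputable def diffMoment (S : ℝ) (s : Set (ℝ × ℝ)) (k : ℕ) : ℝ :=
  ∫ p in s, (p.1 - p.2) ^ k ∂(mixLaw S).prod (mixLaw S)

lemma diffMoment_setOf_le {S : ℝ} (hS : S ∈ Icc (0:ℝ) 1) (k : ℕ) :
    diffMoment S {p | p.1 ≤ p.2} k
      = S * S * 0 ^ k + (1 - S) * S * ((-1) ^ k / (k + 1))
        + (1 - S) * (1 - S) * ((-1) ^ k / ((k + 1) * (k + 2))) := by
  have h0U : ∫ y in Ioc (0:ℝ) 1,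
      {p : ℝ × ℝ | p.1 ≤ p.2}.indicator (fun p => (p.1 - p.2) ^ k) (0, y)
      = (-1) ^ k / (k + 1) := by
    rw [setIntegral_congr_fun measurableSet_Ioc fun (y : ℝ) (hy : y ∈ Ioc (0:ℝ) 1) =>
      indicator_of_mem (show (0, y) ∈ {p : ℝ × ℝ | p.1 ≤ p.2} from hy.1.le) _]
    have hneg : ∀ y : ℝ, (0 - y) ^ k = (-1) ^ k * y ^ k := fun y => by ring
    simp only [hneg, integral_const_mul, integral_Ioc_zero_one_pow]
    ring
  have hU0 : ∫ x in Ioc (0:ℝ) 1,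
      {p : ℝ × ℝ | p.1 ≤ p.2}.indicator (fun p => (p.1 - p.2) ^ k) (x, 0) = 0 := by
    rw [setIntegral_congr_fun measurableSet_Ioc fun (x : ℝ) (hx : x ∈ Ioc (0:ℝ) 1) =>
      indicator_of_notMem (show (x, 0) ∉ {p : ℝ × ℝ | p.1 ≤ p.2} from not_le.2 hx.1) _]
    simp
  rw [diffMoment,
    setIntegral_mixLaw_prod_mixLaw hS (by fun_prop)
      (measurableSet_le measurable_fst measurable_snd),
    h0U, hU0, integral_unitSquare_indicator_le_sub_pow,
    indicator_of_mem
      (show ((0:ℝ), (0:ℝ)) ∈ {p : ℝ × ℝ | p.1 ≤ p.2} from le_refl (0:ℝ))]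
  simp

lemma diffMoment_setOf_lt {S : ℝ} (hS : S ∈ Icc (0:ℝ) 1) (k : ℕ) :
    diffMoment S {p | p.2 < p.1} k
      = S * (1 - S) * (1 / (k + 1)) + (1 - S) * (1 - S) * (1 / ((k + 1) * (k + 2))) := by
  have h0U : ∫ y in Ioc (0:ℝ) 1,
      {p : ℝ × ℝ | p.2 < p.1}.indicator (fun p => (p.1 - p.2) ^ k) (0, y) = 0 := by
    rw [setIntegral_congr_fun measurableSet_Ioc fun (y : ℝ) (hy : y ∈ Ioc (0:ℝ) 1) =>
      indicator_of_notMem (show (0, y) ∉ {p : ℝ × ℝ | p.2 < p.1} from not_lt.2 hy.1.le) _]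
    simp
  have hU0 : ∫ x in Ioc (0:ℝ) 1,
      {p : ℝ × ℝ | p.2 < p.1}.indicator (fun p => (p.1 - p.2) ^ k) (x, 0) = 1 / (k + 1) := by
    rw [setIntegral_congr_fun measurableSet_Ioc fun (x : ℝ) (hx : x ∈ Ioc (0:ℝ) 1) =>
      indicator_of_mem (show (x, 0) ∈ {p : ℝ × ℝ | p.2 < p.1} from hx.1) _]
    simp only [sub_zero, integral_Ioc_zero_one_pow]
  rw [diffMoment,
    setIntegral_mixLaw_prod_mixLaw hS (by fun_prop)
      (measurableSet_lt measurable_snd measurable_fst),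
    h0U, hU0, integral_unitSquare_indicator_lt_sub_pow,
    indicator_of_notMem
      (show ((0:ℝ), (0:ℝ)) ∉ {p : ℝ × ℝ | p.2 < p.1} from lt_irrefl (0:ℝ))]
  simp

lemma variance_cond_mixLaw_prod (S : ℝ) (s : Set (ℝ × ℝ)) :
    variance (fun p : ℝ × ℝ => p.1 - p.2) (((mixLaw S).prod (mixLaw S))[|s])
      = diffMoment S s 2 / diffMoment S s 0 - (diffMoment S s 1 / diffMoment S s 0) ^ 2 := by
  have hf : MemLp (fun p : ℝ × ℝ => p.1 - p.2) 2 ((mixLaw S).prod (mixLaw S)) :=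
    memLp_of_continuous_of_measure_compl_null (by fun_prop) (isCompact_Icc.prod isCompact_Icc)
      (mixLaw_prod_mixLaw_unitSquare_compl S) 2
  rw [variance_cond_eq (hf.restrict s)]
  simp [diffMoment, measureReal_def]

theorem stmt10 {Ω : Type*} [MeasureSpace Ω] [IsProbabilityMeasure (ℙ : Measure Ω)]
    (S : ℝ) (hS : S ∈ Set.Ico (0:ℝ) 1)
    (X1 X2 : Ω → ℝ) (hX1 : Measurable X1) (hX2 : Measurable X2)
    (hindep : IndepFun X1 X2)
    (hL1 : Measure.map X1 ℙ = mixLaw S) (hL2 : Measure.map X2 ℙ = mixLaw S) :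
    variance (fun ω => X1 ω - X2 ω) (ℙ[|{ω | X1 ω ≤ X2 ω}])
      = (1/6) * ((1 - S)*(1 + 3*S) / (1 + S^2))
        - ((1/3) * ((1 - S)*(1 + 2*S) / (1 + S^2)))^2 ∧
    variance (fun ω => X1 ω - X2 ω) (ℙ[|{ω | X2 ω < X1 ω}])
      = (1/6) * ((1 + 3*S) / (1 + S)) - ((1/3) * ((1 + 2*S) / (1 + S)))^2 := by
  obtain ⟨hS0, hS1⟩ := hS
  have hS' : S ∈ Icc (0:ℝ) 1 := ⟨hS0, hS1.le⟩
  have hjoint : Measure.map (fun ω => (X1 ω, X2 ω)) ℙ = (mixLaw S).prod (mixLaw S) := by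
    rw [(indepFun_iff_map_prod_eq_prod_map_map hX1.aemeasurable hX2.aemeasurable).1 hindep,
      hL1, hL2]
  have hvar : ∀ s, MeasurableSet s →
      variance (fun ω => X1 ω - X2 ω) (ℙ[|(fun ω => (X1 ω, X2 ω)) ⁻¹' s])
        = diffMoment S s 2 / diffMoment S s 0 - (diffMoment S s 1 / diffMoment S s 0) ^ 2 :=
    fun s hs => by
      rw [← variance_cond_mixLaw_prod, ← hjoint,
        ← variance_comp_cond_preimage ℙ (hX1.prodMk hX2) (by fun_prop) hs]
      rfl
  refine ⟨(hvar {p | p.1 ≤ p.2} (measurableSet_le measurable_fst measurable_snd)).trans ?_,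
    (hvar {p | p.2 < p.1} (measurableSet_lt measurable_snd measurable_fst)).trans ?_⟩
  · simp only [diffMoment_setOf_le hS']
    field_simp
    ring
  · simp only [diffMoment_setOf_lt hS']
    field_simp
    ring
end
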